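/- For every r ≥ 1 and all vectors a, b in ℝ^d, one has ⟨|a|^{r-1} a − |b|^{r-1} b, a − b⟩ ≥ 2^{-r} |a − b|^{r+1}. -/

import Mathlib

/-!
By polarization, `⟪s • a - t • b, a - b⟫ = ((s - t)(‖a‖² - ‖b‖²) + (s + t)‖a - b‖²) / 2`.
With `s = ‖a‖^(r-1)`, `t = ‖b‖^(r-1)` the first term is nonnegative, both factors being
increasing in the norm. For the second, the triangle inequality gives
`‖a - b‖^(r-1) ≤ (‖a‖ + ‖b‖)^(r-1) ≤ 2^(r-1) (s + t)`, so `(s + t)‖a - b‖² / 2` already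
dominates `2^(-r) ‖a - b‖^(r+1)`.
-/

open Real

lemma inner_smul_sub_smul_sub_eq {E : Type*} [NormedAddCommGroup E] [InnerProductSpace ℝ E]
    (s t : ℝ) (a b : E) :
    inner ℝ (s • a - t • b) (a - b) =
      ((s - t) * (‖a‖ ^ 2 - ‖b‖ ^ 2) + (s + t) * ‖a - b‖ ^ 2) / 2 := by
  rw [norm_sub_sq_real]
  simp only [inner_sub_left, inner_sub_right, real_inner_smul_left, real_inner_self_eq_norm_sq,
    real_inner_comm a b]
  ring

lemma add_rpow_le_two_rpow_mul_add_rpow {A B p : ℝ} (hA : 0 ≤ A) (hB : 0 ≤ B) (hp : 0 ≤ p) :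
    (A + B) ^ p ≤ 2 ^ p * (A ^ p + B ^ p) := by
  calc (A + B) ^ p ≤ (2 * max A B) ^ p :=
        rpow_le_rpow (by positivity) (by linarith [le_max_left A B, le_max_right A B]) hp
    _ = 2 ^ p * max A B ^ p := mul_rpow zero_le_two (le_max_of_le_left hA)
    _ ≤ 2 ^ p * (A ^ p + B ^ p) := by
        gcongr
        rcases le_total A B with h | h
        · rw [max_eq_right h]; linarith [rpow_nonneg hA p]
        · rw [max_eq_left h]; linarith [rpow_nonneg hB p]

lemma rpow_sub_rpow_mul_sq_sub_sq_nonneg {A B p : ℝ} (hA : 0 ≤ A) (hB : 0 ≤ B) (hp : 0 ≤ p) :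
    0 ≤ (A ^ p - B ^ p) * (A ^ 2 - B ^ 2) :=
  ((monotoneOn_rpow_Ici_of_exponent_nonneg hp).monovaryOn
    (pow_left_monotoneOn (n := 2))).sub_mul_sub_nonneg hB hA

theorem two_rpow_neg_mul_norm_sub_rpow_le_inner {E : Type*} [NormedAddCommGroup E]
    [InnerProductSpace ℝ E] {r : ℝ} (hr : 1 ≤ r) (a b : E) :
    2 ^ (-r) * ‖a - b‖ ^ (r + 1) ≤ inner ℝ (‖a‖ ^ (r - 1) • a - ‖b‖ ^ (r - 1) • b) (a - b) := by
  have hp : 0 ≤ r - 1 := sub_nonneg.2 hr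
  have h_mono := rpow_sub_rpow_mul_sq_sub_sq_nonneg (norm_nonneg a) (norm_nonneg b) hp
  have h_tri : ‖a - b‖ ^ (r - 1) ≤ 2 ^ (r - 1) * (‖a‖ ^ (r - 1) + ‖b‖ ^ (r - 1)) :=
    (rpow_le_rpow (norm_nonneg _) (norm_sub_le a b) hp).trans
      (add_rpow_le_two_rpow_mul_add_rpow (norm_nonneg a) (norm_nonneg b) hp)
  have h_split : ‖a - b‖ ^ (r + 1) = ‖a - b‖ ^ (r - 1) * ‖a - b‖ ^ 2 := by
    rw [← rpow_two, ← rpow_add' (norm_nonneg _) (by linarith)]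
    ring_nf
  have h_two : (2 : ℝ) ^ (-r) * 2 ^ (r - 1) = 1 / 2 := by
    rw [← rpow_add zero_lt_two, show -r + (r - 1) = -1 by ring, rpow_neg_one, one_div]
  rw [inner_smul_sub_smul_sub_eq]
  calc 2 ^ (-r) * ‖a - b‖ ^ (r + 1)
      = 2 ^ (-r) * ‖a - b‖ ^ (r - 1) * ‖a - b‖ ^ 2 := by rw [h_split, mul_assoc]
    _ ≤ 2 ^ (-r) * (2 ^ (r - 1) * (‖a‖ ^ (r - 1) + ‖b‖ ^ (r - 1))) * ‖a - b‖ ^ 2 := by gcongr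
    _ = (‖a‖ ^ (r - 1) + ‖b‖ ^ (r - 1)) * ‖a - b‖ ^ 2 / 2 := by rw [← mul_assoc, h_two]; ring
    _ ≤ _ := by linarith

theorem damping_strong_monotonicity (d : ℕ) (r : ℝ) (hr : 1 ≤ r)
    (a b : EuclideanSpace ℝ (Fin d)) :
    (inner ℝ (‖a‖ ^ (r - 1) • a - ‖b‖ ^ (r - 1) • b) (a - b) : ℝ) ≥
      (2 : ℝ) ^ (-r) * ‖a - b‖ ^ (r + 1) :=
  two_rpow_neg_mul_norm_sub_rpow_le_inner hr a b
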